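/- arXiv:1209.2448 — 8 statements merged into one kernel-verified Lean document; each statement's English description precedes it below -/
import Mathlib

section
/- Let A = {a_1,...,a_N} ⊆ ℤ^n and for β ∈ ℤ^n let U⁺(β) = {u ∈ ℕ^N : Σ u_i a_i = β} and w(β) = min{Σ u_i : u ∈ U⁺(β)}. Let p be a prime. If γ ∈ ℤ^n satisfies: U⁺(γ) ≠ ∅ and w(γ) ≤ w(γ') for every γ' ∈ (γ + pℤ^n) with U⁺(γ') ≠ ∅, then every minimal element u ∈ U⁺(γ) (i.e. with Σ u_i = w(γ)) satisfies u_i ≤ p−1 for all i. -/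
/-- If `γ` has minimal weight among all lattice points congruent to it mod `p`
(with nonempty `U⁺`), then `γ` is good: every minimal representation `u` of `γ`
has all coordinates `≤ p - 1`. -/
theorem stmt0 {n N : ℕ} (a : Fin N → Fin n → ℤ) (p : ℕ) (hp : p.Prime)
    (γ : Fin n → ℤ)
    (Uplus : (Fin n → ℤ) → Set (Fin N → ℕ))
    (hUplus : ∀ β, Uplus β = {u | ∀ j, ∑ i, (u i : ℤ) * a i j = β j})
    (w : (Fin n → ℤ) → ℕ)
    (hw : ∀ β, w β = sInf {s | ∃ u ∈ Uplus β, ∑ i, u i = s})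
    (hne : (Uplus γ).Nonempty)
    (hmin : ∀ γ' : Fin n → ℤ, (∀ j, (p : ℤ) ∣ (γ' j - γ j)) →
      (Uplus γ').Nonempty → w γ ≤ w γ')
    (u : Fin N → ℕ) (hu : u ∈ Uplus γ) (humin : ∑ i, u i = w γ) :
    ∀ i, u i ≤ p - 1 := by
  intro i
  by_contra hlt
  push_neg at hlt
  have hpu : p ≤ u i := by omega
  -- define the shifted vector
  set u' : Fin N → ℕ := Function.update u i (u i - p) with hu'
  set γ' : Fin n → ℤ := fun j => γ j - (p : ℤ) * a i j with hγ'
  have hu'i : u' i = u i - p := Function.update_self i _ u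
  have hu'ne : ∀ k, k ≠ i → u' k = u k := fun k hk => Function.update_of_ne hk _ u
  have hsum : ∑ k, u' k = ∑ k, u k - p := by
    rw [Finset.sum_eq_sum_sdiff_singleton_add (Finset.mem_univ i) u',
        Finset.sum_eq_sum_sdiff_singleton_add (Finset.mem_univ i) u]
    have : ∑ k ∈ Finset.univ \ {i}, u' k = ∑ k ∈ Finset.univ \ {i}, u k := by
      apply Finset.sum_congr rfl
      intro k hk
      exact hu'ne k (by simpa using (Finset.mem_sdiff.mp hk).2)
    have hle : p ≤ u i := hpu
    omega
  have hmemu := hu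
  rw [hUplus] at hmemu
  have hmem' : u' ∈ Uplus γ' := by
    rw [hUplus]
    intro j
    have : ∑ k, (u' k : ℤ) * a k j = ∑ k, (u k : ℤ) * a k j - (p : ℤ) * a i j := by
      rw [Finset.sum_eq_sum_sdiff_singleton_add (Finset.mem_univ i) (fun k => (u' k : ℤ) * a k j),
          Finset.sum_eq_sum_sdiff_singleton_add (Finset.mem_univ i) (fun k => (u k : ℤ) * a k j)]
      have h1 : ∑ k ∈ Finset.univ \ {i}, (u' k : ℤ) * a k j
          = ∑ k ∈ Finset.univ \ {i}, (u k : ℤ) * a k j := by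
        apply Finset.sum_congr rfl
        intro k hk
        rw [hu'ne k (by simpa using (Finset.mem_sdiff.mp hk).2)]
      rw [h1, hu'i]
      have : ((u i - p : ℕ) : ℤ) = (u i : ℤ) - p := by
        omega
      rw [this]
      ring
    rw [this, hmemu j]
  have hdvd : ∀ j, (p : ℤ) ∣ (γ' j - γ j) := by
    intro j
    simp [hγ']
  have hwle : w γ' ≤ ∑ k, u' k := by
    rw [hw]
    exact Nat.sInf_le ⟨u', hmem', rfl⟩
  have hge := hmin γ' hdvd ⟨u', hmem'⟩
  have hpi : p ≤ ∑ k, u k := le_trans hpu (Finset.single_le_sum (fun k _ => Nat.zero_le _) (Finset.mem_univ i))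
  have hp0 : 0 < p := hp.pos
  omega
end

section
/- Let L = {l ∈ ℤ^N : Σ l_i a_i = 0} and let γ ∈ ℤ^n be good with u ∈ U⁺_min(γ). If l ∈ L with Σ_{i=1}^N l_i > 0, then there exists an index i with l_i > 0 and u_i < l_i. Consequently the operator ∏_{l_i>0} (∂/∂λ_i)^{l_i} annihilates the monomial λ_1^{u_1}⋯λ_N^{u_N}. -/
/-!
If every `i` with `0 < lᵢ` had `lᵢ ≤ uᵢ`, then `u - l` would be a vector of natural numbers with the same
image `γ` as `u` and strictly smaller coordinate sum, contradicting the minimality of `u`.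
For the annihilation, `∂/∂λᵢ` lowers the `λᵢ`-exponent of every monomial by one and no other
partial derivative raises it, so `lᵢ` derivatives in `λᵢ` kill any polynomial whose
`λᵢ`-degree is below `lᵢ`, wherever they occur in the composite operator.
-/

/-- The composite operator `∏ᵢ (∂/∂λᵢ)^(e i)` applied to a multivariate
polynomial (the factors commute, so the order of composition is immaterial). -/
noncomputable def applyDiffs {N : ℕ} {F : Type*} [CommSemiring F] (e : Fin N → ℕ)
    (f : MvPolynomial (Fin N) F) : MvPolynomial (Fin N) F :=
  (List.finRange N).foldr
    (fun i g => ((MvPolynomial.pderiv i).toLinearMap ^ e i) g) f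

open MvPolynomial

theorem exists_pos_lt_of_forall_sum_le {ι κ : Type*} [Fintype ι] (a : ι → κ → ℤ)
    (l : ι → ℤ) (hl : ∀ j, ∑ i, l i * a i j = 0) (hlsum : 0 < ∑ i, l i) (u : ι → ℕ)
    (humin : ∀ v : ι → ℕ, (∀ j, ∑ i, (v i : ℤ) * a i j = ∑ i, (u i : ℤ) * a i j) →
      ∑ i, u i ≤ ∑ i, v i) :
    ∃ i, 0 < l i ∧ (u i : ℤ) < l i := by
  by_contra! hc
  set v : ι → ℕ := fun i => ((u i : ℤ) - l i).toNat
  have hv : ∀ i, (v i : ℤ) = u i - l i := fun i =>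
    Int.toNat_of_nonneg (by rcases le_or_gt (l i) 0 with h | h <;> [omega; linarith [hc i h]])
  have hv_fiber : ∀ j, ∑ i, (v i : ℤ) * a i j = ∑ i, (u i : ℤ) * a i j := by
    intro j
    simp only [hv, sub_mul, Finset.sum_sub_distrib, hl j, sub_zero]
  have hv_sum : ∑ i, (v i : ℤ) = ∑ i, (u i : ℤ) - ∑ i, l i := by
    simp only [hv, Finset.sum_sub_distrib]
  have := humin v hv_fiber
  zify at this
  omega

section PartialDerivatives

variable {σ R : Type*} [CommSemiring R]

theorem add_single_mem_support_of_mem_support_pderiv {p : MvPolynomial σ R} {j : σ}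
    {m : σ →₀ ℕ} (hm : m ∈ (pderiv j p).support) : m + Finsupp.single j 1 ∈ p.support := by
  rw [mem_support_iff, coeff_pderiv] at hm
  exact mem_support_iff.mpr (left_ne_zero_of_mul hm)

theorem pderiv_pow_apply_eq_zero {p : MvPolynomial σ R} {i : σ} {k : ℕ}
    (hp : ∀ m ∈ p.support, m i < k) : ((pderiv i).toLinearMap ^ k) p = 0 := by
  induction k generalizing p with
  | zero => ext m; simpa using hp m
  | succ k ih =>
    rw [pow_succ, Module.End.mul_apply]
    refine ih fun m hm => ?_
    have := hp _ (add_single_mem_support_of_mem_support_pderiv hm)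
    simp only [Finsupp.add_apply, Finsupp.single_eq_same] at this
    omega

theorem lt_of_mem_support_pderiv_pow_apply {p : MvPolynomial σ R} {i : σ} {k : ℕ}
    (hp : ∀ m ∈ p.support, m i < k) (j : σ) (r : ℕ) :
    ∀ m ∈ (((pderiv j).toLinearMap ^ r) p).support, m i < k := by
  induction r generalizing p with
  | zero => simpa using hp
  | succ r ih =>
    rw [pow_succ, Module.End.mul_apply]
    refine ih fun m hm => ?_
    have := hp _ (add_single_mem_support_of_mem_support_pderiv hm)
    rw [Finsupp.add_apply] at this
    omega

theorem lt_of_mem_support_foldr_pderiv_pow {p : MvPolynomial σ R} {i : σ} {k : ℕ}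
    (hp : ∀ m ∈ p.support, m i < k) (e : σ → ℕ) (L : List σ) :
    ∀ m ∈ (L.foldr (fun j g => ((pderiv j).toLinearMap ^ e j) g) p).support, m i < k := by
  induction L with
  | nil => exact hp
  | cons j L ih => exact lt_of_mem_support_pderiv_pow_apply ih j (e j)

theorem foldr_pderiv_pow_eq_zero {p : MvPolynomial σ R} {i : σ} (e : σ → ℕ)
    (hp : ∀ m ∈ p.support, m i < e i) {L : List σ} (hi : i ∈ L) :
    L.foldr (fun j g => ((pderiv j).toLinearMap ^ e j) g) p = 0 := by
  induction L with
  | nil => simp at hi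
  | cons j L ih =>
    rw [List.foldr_cons]
    by_cases hiL : i ∈ L
    · rw [ih hiL, map_zero]
    · obtain rfl : i = j := (List.mem_cons.mp hi).resolve_right hiL
      exact pderiv_pow_apply_eq_zero (lt_of_mem_support_foldr_pderiv_pow hp e L)

end PartialDerivatives

theorem applyDiffs_monomial_eq_zero {N : ℕ} {F : Type*} [CommSemiring F] (e : Fin N → ℕ)
    (s : Fin N →₀ ℕ) (c : F) {i : Fin N} (hi : s i < e i) :
    applyDiffs e (monomial s c) = 0 :=
  foldr_pderiv_pow_eq_zero e
    (fun m hm => by rwa [Finset.mem_singleton.mp (support_monomial_subset hm)])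
    (List.mem_finRange i)

theorem stmt2_general {n N : ℕ} (a : Fin N → Fin n → ℤ)
    (F : Type*) [Field F]
    (γ : Fin n → ℤ)
    (l : Fin N → ℤ) (hl : ∀ j, ∑ i, l i * a i j = 0) (hlsum : 0 < ∑ i, l i)
    (u : Fin N → ℕ)
    (hu : ∀ j, ∑ i, (u i : ℤ) * a i j = γ j)
    (humin : ∀ v : Fin N → ℕ, (∀ j, ∑ i, (v i : ℤ) * a i j = γ j) →
      ∑ i, u i ≤ ∑ i, v i) :
    (∃ i, 0 < l i ∧ (u i : ℤ) < l i) ∧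
      applyDiffs (fun i => (l i).toNat)
        (MvPolynomial.monomial (Finsupp.equivFunOnFinite.symm u) (1 : F)) = 0 := by
  obtain ⟨i, hli, hui⟩ := exists_pos_lt_of_forall_sum_le a l hl hlsum u
    fun v hv => humin v fun j => (hv j).trans (hu j)
  refine ⟨⟨i, hli, hui⟩, applyDiffs_monomial_eq_zero _ _ _ (i := i) ?_⟩
  simp only [Finsupp.coe_equivFunOnFinite_symm]
  omega

/-- If `γ` is good, `u ∈ U⁺_min(γ)` and `l ∈ L` with `Σ lᵢ > 0`, then some `i`
has `lᵢ > 0` and `uᵢ < lᵢ`; consequently `∏_{lᵢ>0} (∂/∂λᵢ)^{lᵢ}` annihilates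
the monomial `λ₁^{u₁} ⋯ λ_N^{u_N}`. -/
theorem stmt2 {n N : ℕ} (a : Fin N → Fin n → ℤ) (p : ℕ) (hp : p.Prime)
    (F : Type*) [Field F]
    (γ : Fin n → ℤ)
    (l : Fin N → ℤ) (hl : ∀ j, ∑ i, l i * a i j = 0) (hlsum : 0 < ∑ i, l i)
    (u : Fin N → ℕ)
    (hu : ∀ j, ∑ i, (u i : ℤ) * a i j = γ j)
    (humin : ∀ v : Fin N → ℕ, (∀ j, ∑ i, (v i : ℤ) * a i j = γ j) →
      ∑ i, u i ≤ ∑ i, v i)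
    (hgood : ∀ v : Fin N → ℕ, (∀ j, ∑ i, (v i : ℤ) * a i j = γ j) →
      (∑ i, v i = ∑ i, u i) → ∀ i, v i ≤ p - 1) :
    (∃ i, 0 < l i ∧ (u i : ℤ) < l i) ∧
      applyDiffs (fun i => (l i).toNat)
        (MvPolynomial.monomial (Finsupp.equivFunOnFinite.symm u) (1 : F)) = 0 :=
  stmt2_general a F γ l hl hlsum u hu humin
end

section
/- Let p be prime, γ ∈ ℤ^n good, and F_γ(λ) = Σ_{u ∈ U⁺_min(γ)} λ_1^{u_1}⋯λ_N^{u_N}/(u_1!⋯u_N!) ∈ 𝔽_p[λ_1,...,λ_N]. Then for every l ∈ L with Σ_{i=1}^N l_i = 0, the operator ∏_{l_i>0}(∂/∂λ_i)^{l_i} − ∏_{l_i<0}(∂/∂λ_i)^{−l_i} annihilates F_γ. -/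
open MvPolynomial Finsupp
open scoped Nat

section Derivatives

lemma pderiv_pow_monomial {σ R : Type*} [CommSemiring R] (i : σ) (k : ℕ) (s : σ →₀ ℕ)
    (c : R) :
    ((pderiv i).toLinearMap ^ k) (monomial s c) =
      monomial (s - single i k) (c * ((s i).descFactorial k : R)) := by
  induction k with
  | zero => simp
  | succ k ih =>
    rw [pow_succ', Module.End.mul_apply, ih, Derivation.coeFn_coe, pderiv_monomial,
      tsub_tsub, ← single_add, tsub_apply, single_eq_same, Nat.descFactorial_succ]
    push_cast
    congr 1
    ring

variable {N : ℕ} {F : Type*}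

lemma foldr_pderiv_pow_monomial [CommSemiring F] (e u : Fin N → ℕ) (c : F)
    {L : List (Fin N)} (hL : L.Nodup) :
    L.foldr (fun i g => ((pderiv i).toLinearMap ^ e i) g)
        (monomial (equivFunOnFinite.symm u) c) =
      monomial (equivFunOnFinite.symm fun i => if i ∈ L then u i - e i else u i)
        (c * ((L.map fun i => (u i).descFactorial (e i)).prod : F)) := by
  induction L with
  | nil => simp
  | cons i t ih =>
    obtain ⟨hit, ht⟩ := List.nodup_cons.mp hL
    rw [List.foldr_cons, ih ht, pderiv_pow_monomial]
    have hexp : equivFunOnFinite.symm (fun j => if j ∈ t then u j - e j else u j) -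
          single i (e i) =
        equivFunOnFinite.symm fun j => if j ∈ i :: t then u j - e j else u j := by
      ext j
      by_cases hj : j = i
      · subst hj
        simp [hit]
      · simp [hj]
    simp only [hexp, coe_equivFunOnFinite_symm, hit, if_false, List.map_cons,
      List.prod_cons, Nat.cast_mul]
    congr 1
    ring

lemma applyDiffs_monomial [CommSemiring F] (e u : Fin N → ℕ) (c : F) :
    applyDiffs e (monomial (equivFunOnFinite.symm u) c) =
      monomial (equivFunOnFinite.symm (u - e))
        (c * ((∏ i, (u i).descFactorial (e i) : ℕ) : F)) := by
  rw [applyDiffs, foldr_pderiv_pow_monomial e u c (List.nodup_finRange N), Fin.prod_univ_def]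
  simp only [List.mem_finRange, if_true]
  rfl

lemma applyDiffs_sum [CommSemiring F] {ι : Type*} (e : Fin N → ℕ) (S : Finset ι)
    (G : ι → MvPolynomial (Fin N) F) :
    applyDiffs e (∑ u ∈ S, G u) = ∑ u ∈ S, applyDiffs e (G u) := by
  unfold applyDiffs
  induction List.finRange N with
  | nil => rfl
  | cons i t ih => simp only [List.foldr_cons, ih, map_sum]

noncomputable def dividedMonomial [Field F] (u : Fin N → ℕ) : MvPolynomial (Fin N) F :=
  monomial (equivFunOnFinite.symm u) ((∏ i, (u i)! : ℕ) : F)⁻¹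

lemma applyDiffs_dividedMonomial [Field F] (e u : Fin N → ℕ)
    (hu : ((∏ i, (u i)! : ℕ) : F) ≠ 0) :
    applyDiffs e (dividedMonomial u : MvPolynomial (Fin N) F) =
      if ∀ i, e i ≤ u i then dividedMonomial (u - e) else 0 := by
  rw [dividedMonomial, applyDiffs_monomial]
  split_ifs with he
  · have hsplit : ((∏ i, (u i - e i)! : ℕ) : F) * ((∏ i, (u i).descFactorial (e i) : ℕ) : F) =
        ((∏ i, (u i)! : ℕ) : F) := by
      rw [← Nat.cast_mul, ← Finset.prod_mul_distrib]
      exact congrArg _ (Finset.prod_congr rfl fun i _ => Nat.factorial_mul_descFactorial (he i))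
    rw [← hsplit] at hu ⊢
    rw [dividedMonomial, mul_inv, mul_assoc, inv_mul_cancel₀ (right_ne_zero_of_mul hu), mul_one]
    rfl
  · obtain ⟨i, hi⟩ := not_forall.mp he
    rw [Finset.prod_eq_zero (f := fun i => (u i).descFactorial (e i)) (Finset.mem_univ i)
      (Nat.descFactorial_eq_zero_iff_lt.mpr (not_le.mp hi)), Nat.cast_zero, mul_zero,
      monomial_zero]

end Derivatives

section Translation

variable {n N : ℕ}

/-- `u ∈ U⁺_min(γ)`. -/
def IsMinRep (a : Fin N → Fin n → ℤ) (γ : Fin n → ℤ) (u : Fin N → ℕ) : Prop :=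
  (∀ j, ∑ i, (u i : ℤ) * a i j = γ j) ∧
    ∀ v : Fin N → ℕ, (∀ j, ∑ i, (v i : ℤ) * a i j = γ j) → ∑ i, u i ≤ ∑ i, v i

lemma IsMinRep.of_eq_sub {a : Fin N → Fin n → ℤ} {γ : Fin n → ℤ} {u v : Fin N → ℕ}
    {m : Fin N → ℤ} (hu : IsMinRep a γ u) (hm : ∀ j, ∑ i, m i * a i j = 0)
    (hmsum : ∑ i, m i = 0) (hv : ∀ i, (v i : ℤ) = u i - m i) : IsMinRep a γ v := by
  obtain ⟨hrep, hmin⟩ := hu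
  have hvsum : ((∑ i, v i : ℕ) : ℤ) = ∑ i, u i := by
    push_cast
    simp only [hv, Finset.sum_sub_distrib, hmsum, sub_zero]
  refine ⟨fun j => ?_, fun w hw => ?_⟩
  · simp only [hv, sub_mul, Finset.sum_sub_distrib, hrep j, hm j, sub_zero]
  · have := hmin w hw
    omega

/-- The bijection is `u ↦ u - m⁺ + m⁻`, with inverse `v ↦ v - m⁻ + m⁺`. -/
lemma sum_sub_toNat_eq_sum_sub_neg_toNat {M : Type*} [AddCommMonoid M]
    (S : Finset (Fin N → ℕ)) (m : Fin N → ℤ)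
    (hsub : ∀ u ∈ S, ∀ v : Fin N → ℕ, (∀ i, (v i : ℤ) = u i - m i) → v ∈ S)
    (hadd : ∀ u ∈ S, ∀ v : Fin N → ℕ, (∀ i, (v i : ℤ) = u i + m i) → v ∈ S)
    (f : (Fin N → ℕ) → M) :
    ∑ u ∈ S with ∀ i, (m i).toNat ≤ u i, f (u - fun i => (m i).toNat) =
      ∑ v ∈ S with ∀ i, (-m i).toNat ≤ v i, f (v - fun i => (-m i).toNat) := by
  refine Finset.sum_nbij' (fun u i => u i - (m i).toNat + (-m i).toNat)
    (fun v i => v i - (-m i).toNat + (m i).toNat) ?_ ?_ ?_ ?_ ?_ <;>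
    simp only [Finset.mem_filter, and_imp]
  · intro u hu hle
    exact ⟨hsub u hu _ fun i => by have := hle i; omega, fun i => by omega⟩
  · intro v hv hle
    exact ⟨hadd v hv _ fun i => by have := hle i; omega, fun i => by omega⟩
  · intro u _ hle
    funext i
    have := hle i
    omega
  · intro v _ hle
    funext i
    have := hle i
    omega
  · intro u _ hle
    congr 1
    funext i
    simp only [Pi.sub_apply]
    omega

end Translation

/-- For good `γ`, the polynomial `F_γ = Σ_{u ∈ U⁺_min(γ)} λ^u / ∏ uᵢ!` over
`𝔽_p` is annihilated by every box operator
`∏_{lᵢ>0}(∂/∂λᵢ)^{lᵢ} - ∏_{lᵢ<0}(∂/∂λᵢ)^{-lᵢ}` with `l ∈ L`, `Σ lᵢ = 0`. -/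
theorem stmt4 {n N : ℕ} (a : Fin N → Fin n → ℤ) (p : ℕ) (hp : p.Prime)
    (γ : Fin n → ℤ)
    (Uminset : Finset (Fin N → ℕ))
    (hUminset : ∀ u : Fin N → ℕ, u ∈ Uminset ↔
      ((∀ j, ∑ i, (u i : ℤ) * a i j = γ j) ∧
        ∀ v : Fin N → ℕ, (∀ j, ∑ i, (v i : ℤ) * a i j = γ j) →
          ∑ i, u i ≤ ∑ i, v i))
    (hgood : ∀ u ∈ Uminset, ∀ i, u i ≤ p - 1)
    (Fγ : MvPolynomial (Fin N) (ZMod p))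
    (hFγ : Fγ = ∑ u ∈ Uminset,
      MvPolynomial.monomial (Finsupp.equivFunOnFinite.symm u)
        ((∏ i, (u i).factorial : ℕ) : ZMod p)⁻¹)
    (l : Fin N → ℤ) (hl : ∀ j, ∑ i, l i * a i j = 0) (hlsum : ∑ i, l i = 0) :
    applyDiffs (fun i => (l i).toNat) Fγ =
      applyDiffs (fun i => (-l i).toNat) Fγ := by
  have := Fact.mk hp
  have hU : ∀ u, u ∈ Uminset ↔ IsMinRep a γ u := hUminset
  have hfact : ∀ u ∈ Uminset, ((∏ i, (u i)! : ℕ) : ZMod p) ≠ 0 := fun u hu => by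
    rw [Nat.cast_prod]
    exact Finset.prod_ne_zero_iff.mpr fun i _ => ((IsUnit.natCast_factorial_iff_of_charP p).mpr
      (Nat.lt_of_le_sub_one hp.pos (hgood u hu i))).ne_zero
  have hdiff : ∀ e, applyDiffs e Fγ =
      ∑ u ∈ Uminset with ∀ i, e i ≤ u i, dividedMonomial (u - e) := fun e => by
    rw [hFγ, Finset.sum_filter, applyDiffs_sum]
    exact Finset.sum_congr rfl fun u hu => applyDiffs_dividedMonomial e u (hfact u hu)
  have hsub : ∀ u ∈ Uminset, ∀ v : Fin N → ℕ, (∀ i, (v i : ℤ) = u i - l i) → v ∈ Uminset :=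
    fun u hu v hv => (hU v).mpr (((hU u).mp hu).of_eq_sub hl hlsum hv)
  have hadd : ∀ u ∈ Uminset, ∀ v : Fin N → ℕ, (∀ i, (v i : ℤ) = u i + l i) → v ∈ Uminset :=
    fun u hu v hv => (hU v).mpr (((hU u).mp hu).of_eq_sub (m := -l)
      (fun j => by simp [hl j]) (by simp [hlsum]) (by simpa using hv))
  rw [hdiff, hdiff]
  exact sum_sub_toNat_eq_sum_sub_neg_toNat Uminset l hsub hadd dividedMonomial
end

section
/- Let p be prime and γ ∈ ℤ^n good with a_j = (a_{j1},...,a_{jn}). Then F_γ(λ) = Σ_{u ∈ U⁺_min(γ)} λ^u/(u_1!⋯u_N!) satisfies the mod-p Euler equations: for each i = 1,...,n, Σ_{j=1}^N a_{ji} λ_j ∂F_γ/∂λ_j = γ_i · F_γ in 𝔽_p[λ_1,...,λ_N] (where γ_i is reduced mod p). -/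
open MvPolynomial

lemma aux_x_pderiv {N : ℕ} {R : Type*} [CommRing R] (j : Fin N) (s : Fin N →₀ ℕ) (c : R) :
    X j * pderiv j (monomial s c) = MvPolynomial.C (s j : R) * monomial s c := by
  rw [pderiv_monomial, X, monomial_mul, C_mul_monomial]
  by_cases h : s j = 0
  · simp [h]
  · have hs : Finsupp.single j 1 + (s - Finsupp.single j 1) = s := by
      ext k
      rcases eq_or_ne k j with rfl | hk
      · simp [Finsupp.single_apply, Nat.add_sub_cancel' (Nat.one_le_iff_ne_zero.mpr h)]
      · simp [Finsupp.single_apply, hk.symm]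
    rw [hs]
    ring_nf

/-- For good `γ`, the polynomial `F_γ = Σ_{u ∈ U⁺_min(γ)} λ^u / ∏ uᵢ!` over
`𝔽_p` satisfies the mod-`p` Euler equations:
`Σⱼ a_{ji} λⱼ ∂F_γ/∂λⱼ = γᵢ F_γ` for each `i`. -/
theorem stmt5 {n N : ℕ} (a : Fin N → Fin n → ℤ) (p : ℕ) (hp : p.Prime)
    (γ : Fin n → ℤ)
    (Uminset : Finset (Fin N → ℕ))
    (hUminset : ∀ u : Fin N → ℕ, u ∈ Uminset ↔
      ((∀ j, ∑ i, (u i : ℤ) * a i j = γ j) ∧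
        ∀ v : Fin N → ℕ, (∀ j, ∑ i, (v i : ℤ) * a i j = γ j) →
          ∑ i, u i ≤ ∑ i, v i))
    (hgood : ∀ u ∈ Uminset, ∀ i, u i ≤ p - 1)
    (Fγ : MvPolynomial (Fin N) (ZMod p))
    (hFγ : Fγ = ∑ u ∈ Uminset,
      MvPolynomial.monomial (Finsupp.equivFunOnFinite.symm u)
        ((∏ i, (u i).factorial : ℕ) : ZMod p)⁻¹) :
    ∀ i : Fin n,
      ∑ j, MvPolynomial.C ((a j i : ZMod p)) * MvPolynomial.X j *
          MvPolynomial.pderiv j Fγ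
        = MvPolynomial.C ((γ i : ZMod p)) * Fγ := by
  intro i
  subst hFγ
  rw [Finset.mul_sum]
  have key : ∀ u ∈ Uminset, ∀ j : Fin N,
      MvPolynomial.C ((a j i : ZMod p)) * MvPolynomial.X j *
        MvPolynomial.pderiv j (MvPolynomial.monomial (Finsupp.equivFunOnFinite.symm u)
          ((∏ k, (u k).factorial : ℕ) : ZMod p)⁻¹)
      = MvPolynomial.C ((a j i : ZMod p) * (u j : ZMod p)) *
          MvPolynomial.monomial (Finsupp.equivFunOnFinite.symm u)
            ((∏ k, (u k).factorial : ℕ) : ZMod p)⁻¹ := by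
    intro u _ j
    rw [mul_assoc, aux_x_pderiv, ← mul_assoc, ← C_mul]
    rfl
  simp only [map_sum, Finset.mul_sum]
  rw [Finset.sum_comm]
  refine Finset.sum_congr rfl fun u hu => ?_
  rw [Finset.sum_congr rfl (fun j _ => key u hu j), ← Finset.sum_mul, ← map_sum]
  congr 2
  have h := ((hUminset u).mp hu).1 i
  have h2 : ((γ i : ℤ) : ZMod p) = ((∑ k, (u k : ℤ) * a k i : ℤ) : ZMod p) := by rw [h]
  push_cast at h2 ⊢
  rw [h2]
  exact Finset.sum_congr rfl fun j _ => mul_comm _ _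
end

section
/- Let p be a prime, q = p^a, and for u ∈ {0,...,q−1}^N write each u_i = Σ_{k=0}^{a−1} u_i^{(k)} p^k with 0 ≤ u_i^{(k)} ≤ p−1. Set γ_k = Σ_{i=1}^N u_i^{(k)} a_i ∈ ℤ^n and w_p(u) = Σ_i Σ_k u_i^{(k)}. Then Σ_{k=0}^{a−1} p^k γ_k = Σ_{i=1}^N u_i a_i, and w_p(u) ≥ Σ_{k=0}^{a−1} w(γ_k), with equality if and only if u^{(k)} ∈ U⁺_min(γ_k) for all k. -/
private lemma digit_sum_eq (p : ℕ) (hp : 1 ≤ p) (a u : ℕ) (hu : u < p ^ a) :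
    ∑ k ∈ Finset.range a, (u / p ^ k % p) * p ^ k = u := by
  have key : ∀ b : ℕ, ∑ k ∈ Finset.range b, (u / p ^ k % p) * p ^ k = u % p ^ b := by
    intro b
    induction b with
    | zero => simp [Nat.mod_one]
    | succ b ih =>
      rw [Finset.sum_range_succ, ih, pow_succ, Nat.mod_mul]
      ring
  rw [key a, Nat.mod_eq_of_lt hu]

/-- Base-`p` digit decomposition: for `u ∈ {0,…,q-1}^N` with `q = p^a`, digit
vectors `u^{(k)}` and `γ_k = Σᵢ u_i^{(k)} aᵢ` satisfy
`Σ_k p^k γ_k = Σᵢ uᵢ aᵢ` and `w_p(u) ≥ Σ_k w(γ_k)`, with equality iff each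
digit vector `u^{(k)}` is a minimal representation of `γ_k`. -/
theorem stmt9 {n N : ℕ} (a : Fin N → Fin n → ℤ) (p : ℕ) (hp : p.Prime)
    (aexp : ℕ) (q : ℕ) (hq : q = p ^ aexp)
    (u : Fin N → ℕ) (hu : ∀ i, u i ≤ q - 1)
    (ud : Fin N → ℕ → ℕ) (hud : ∀ i k, ud i k = (u i / p ^ k) % p)
    (γ : ℕ → (Fin n → ℤ))
    (hγ : ∀ k j, γ k j = ∑ i, (ud i k : ℤ) * a i j)
    (w : (Fin n → ℤ) → ℕ)
    (hw : ∀ β, w β = sInf {s | ∃ v : Fin N → ℕ,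
      (∀ j, ∑ i, (v i : ℤ) * a i j = β j) ∧ ∑ i, v i = s}) :
    (∀ j, ∑ k ∈ Finset.range aexp, (p : ℤ) ^ k * γ k j
        = ∑ i, (u i : ℤ) * a i j) ∧
    (∑ i, ∑ k ∈ Finset.range aexp, ud i k
        ≥ ∑ k ∈ Finset.range aexp, w (γ k)) ∧
    ((∑ i, ∑ k ∈ Finset.range aexp, ud i k
        = ∑ k ∈ Finset.range aexp, w (γ k))
      ↔ ∀ k < aexp, ∑ i, ud i k = w (γ k)) := by
  have hp1 : 1 ≤ p := hp.one_lt.le.trans' (by omega)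
  have hulq : ∀ i, u i < p ^ aexp := by
    intro i
    have h1 : 1 ≤ p ^ aexp := Nat.one_le_pow _ _ hp.pos
    have := hu i
    omega
  have hdigits : ∀ i, ∑ k ∈ Finset.range aexp, ud i k * p ^ k = u i := by
    intro i
    have := digit_sum_eq p hp.one_le aexp (u i) (hulq i)
    simpa [hud] using this
  -- term-wise bound
  have hle : ∀ k, w (γ k) ≤ ∑ i, ud i k := by
    intro k
    rw [hw]
    exact Nat.sInf_le ⟨fun i => ud i k, fun j => (hγ k j).symm, rfl⟩
  have hswap : ∑ i, ∑ k ∈ Finset.range aexp, ud i k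
      = ∑ k ∈ Finset.range aexp, ∑ i, ud i k := Finset.sum_comm
  refine ⟨?_, ?_, ?_⟩
  · intro j
    calc ∑ k ∈ Finset.range aexp, (p : ℤ) ^ k * γ k j
        = ∑ i, ∑ k ∈ Finset.range aexp, (p : ℤ) ^ k * ((ud i k : ℤ) * a i j) := by
          simp only [hγ, Finset.mul_sum]
          exact Finset.sum_comm
      _ = ∑ i, (u i : ℤ) * a i j := by
          refine Finset.sum_congr rfl fun i _ => ?_
          have := hdigits i
          have : ((∑ k ∈ Finset.range aexp, ud i k * p ^ k : ℕ) : ℤ) = (u i : ℤ) := by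
            rw [this]
          push_cast at this
          calc ∑ k ∈ Finset.range aexp, (p : ℤ) ^ k * ((ud i k : ℤ) * a i j)
              = (∑ k ∈ Finset.range aexp, (ud i k : ℤ) * (p : ℤ) ^ k) * a i j := by
                rw [Finset.sum_mul]; refine Finset.sum_congr rfl fun k _ => by ring
            _ = (u i : ℤ) * a i j := by rw [this]
  · rw [ge_iff_le, hswap]
    exact Finset.sum_le_sum fun k _ => hle k
  · rw [hswap]
    constructor
    · intro h k hk
      have := (Finset.sum_eq_sum_iff_of_le (fun k _ => hle k)).mp h.symm k
        (Finset.mem_range.mpr hk)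
      exact this.symm
    · intro h
      exact Finset.sum_congr rfl fun k hk => h k (Finset.mem_range.mp hk)
end

section
/- Let p be prime, q = p^a, M ⊆ ℤ^n a set satisfying: whenever Σ c_i a_i ∈ M with c ∈ ℕ^N and c_{i_0} ≥ q, also Σ c_i a_i − (q−1)a_{i_0} ∈ M. Let U_M = {u ∈ {0,...,q−1}^N : Σ u_i a_i ∈ M} ≠ ∅ and w_p(M) = min{w_p(u) : u ∈ U_M}. If u ∈ U_M attains w_p(u) = w_p(M), then for each k = 0,...,a−1, the element γ_k = Σ_i u_i^{(k)} a_i is good and u^{(k)} ∈ U⁺_min(γ_k). -/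
/-- digit sum in base `p` -/
def sd (p : ℕ) (m : ℕ) : ℕ := (Nat.digits p m).sum

lemma sd_zero (p : ℕ) : sd p 0 = 0 := by simp [sd]

lemma sd_def {p : ℕ} (hp : 2 ≤ p) (m : ℕ) : sd p m = m % p + sd p (m / p) := by
  rcases Nat.eq_zero_or_pos m with h | h
  · simp [h, sd]
  · rw [sd, Nat.digits_def' hp h, List.sum_cons]; rfl

lemma sd_succ_le {p : ℕ} (hp : 2 ≤ p) : ∀ m, sd p (m + 1) ≤ sd p m + 1 := by
  intro m
  induction m using Nat.strong_induction_on with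
  | _ m ih =>
    have hp0 : 0 < p := by omega
    by_cases hd : p ∣ (m + 1)
    · have hmod : (m + 1) % p = 0 := by
        obtain ⟨t, ht⟩ := hd; rw [ht]; exact Nat.mul_mod_right p t
      have hdiv : (m + 1) / p = m / p + 1 := by
        rw [Nat.succ_div, if_pos hd]
      have h1 : 1 ≤ m := by
        have e1 := Nat.div_add_mod (m + 1) p
        rw [hdiv, hmod] at e1
        have h5 : p ≤ p * (m / p + 1) := Nat.le_mul_of_pos_right p (Nat.succ_pos _)
        linarith
      have hlt : m / p < m := Nat.div_lt_self h1 hp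
      have hfin : sd p (m + 1) ≤ sd p m + 1 := by
        calc sd p (m + 1) = (m + 1) % p + sd p ((m + 1) / p) := sd_def hp _
          _ = sd p (m / p + 1) := by rw [hmod, hdiv]; omega
          _ ≤ sd p (m / p) + 1 := ih _ hlt
          _ ≤ (m % p + sd p (m / p)) + 1 := by omega
          _ = sd p m + 1 := by rw [← sd_def hp]
      exact hfin
    · have hdiv : (m + 1) / p = m / p := by rw [Nat.succ_div, if_neg hd]; omega
      have hmod : (m + 1) % p = m % p + 1 := by
        have h1 : (m + 1) % p = (m % p + 1) % p := by
          conv_lhs => rw [Nat.add_mod, Nat.one_mod_eq_one.mpr (by omega)]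
        have h2 : m % p < p := Nat.mod_lt _ hp0
        rcases Nat.lt_or_ge (m % p + 1) p with h3 | h3
        · rw [h1, Nat.mod_eq_of_lt h3]
        · exfalso
          have h4 : m % p + 1 = p := by omega
          have : (m + 1) % p = 0 := by rw [h1, h4, Nat.mod_self]
          exact hd (Nat.dvd_of_mod_eq_zero this)
      have : sd p (m + 1) = sd p m + 1 := by
        calc sd p (m + 1) = (m + 1) % p + sd p ((m + 1) / p) := sd_def hp _
          _ = (m % p + sd p (m / p)) + 1 := by rw [hmod, hdiv]; omega
          _ = sd p m + 1 := by rw [← sd_def hp]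
      omega

lemma sd_add_le {p : ℕ} (hp : 2 ≤ p) (x y : ℕ) : sd p (x + y) ≤ sd p x + sd p y := by
  have hp0 : 0 < p := by omega
  have key : ∀ S x y, x + y ≤ S → sd p (x + y) ≤ sd p x + sd p y := by
    intro S
    induction S with
    | zero =>
      intro x y h
      have hx : x = 0 := by omega
      have hy : y = 0 := by omega
      simp [hx, hy, sd_zero]
    | succ S ih =>
      intro x y h
      rcases Nat.eq_zero_or_pos x with hx | hx
      · simp [hx]
      have ex := Nat.div_add_mod x p
      have ey := Nat.div_add_mod y p
      have hxm : x % p < p := Nat.mod_lt _ hp0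
      have hym : y % p < p := Nat.mod_lt _ hp0
      set e := (x % p + y % p) / p with he
      set r := (x % p + y % p) % p with hr
      have her : r + p * e = x % p + y % p := by
        rw [hr, he]; exact Nat.mod_add_div _ _
      have hrlt : r < p := Nat.mod_lt _ hp0
      have he1 : e ≤ 1 := by
        by_contra hc
        push_neg at hc
        have : p * 2 ≤ p * e := Nat.mul_le_mul_left p (by omega)
        omega
      have hsplit : x + y = r + (x / p + y / p + e) * p := by
        have hD : (x / p + y / p + e) * p = p * (x / p) + p * (y / p) + p * e := by ring
        rw [hD]; omega
      have hdiv : (x + y) / p = x / p + y / p + e := by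
        rw [hsplit, Nat.add_mul_div_right _ _ hp0, Nat.div_eq_of_lt hrlt]; omega
      have hmod : (x + y) % p = r := by
        rw [hsplit, Nat.add_mul_mod_self_right, Nat.mod_eq_of_lt hrlt]
      have hIH : sd p (x / p + y / p) ≤ sd p (x / p) + sd p (y / p) := by
        apply ih
        have hx2 : x / p < x := Nat.div_lt_self hx hp
        have hy2 : y / p ≤ y := Nat.div_le_self _ _
        omega
      have hstep : sd p (x / p + y / p + e) ≤ sd p (x / p + y / p) + e := by
        rcases Nat.le_one_iff_eq_zero_or_eq_one.mp he1 with h0 | h0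
        · simp [h0]
        · rw [h0]; exact sd_succ_le hp _
      have hpe : e ≤ p * e := Nat.le_mul_of_pos_left e hp0
      calc sd p (x + y) = r + sd p (x / p + y / p + e) := by
            rw [sd_def hp (x + y), hmod, hdiv]
        _ ≤ r + (sd p (x / p) + sd p (y / p) + e) := by omega
        _ ≤ (x % p + sd p (x / p)) + (y % p + sd p (y / p)) := by
            have : r + e ≤ x % p + y % p := by omega
            omega
        _ = sd p x + sd p y := by rw [← sd_def hp, ← sd_def hp]
  exact key (x + y) x y le_rfl

lemma sd_split {p : ℕ} (hp : 2 ≤ p) :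
    ∀ b x y, y < p ^ b → sd p (x * p ^ b + y) = sd p x + sd p y := by
  have hp0 : 0 < p := by omega
  intro b
  induction b with
  | zero =>
    intro x y hy
    have : y = 0 := by simpa using hy
    simp [this, sd_zero]
  | succ b ih =>
    intro x y hy
    have hy' : y / p < p ^ b := by
      rw [Nat.div_lt_iff_lt_mul hp0, ← pow_succ]; exact hy
    have ey : y / p * p + y % p = y := by
      rw [mul_comm]; exact Nat.div_add_mod y p
    have key : x * p ^ (b + 1) + y = y % p + (x * p ^ b + y / p) * p := by
      calc x * p ^ (b + 1) + y = x * (p ^ b * p) + (y / p * p + y % p) := by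
            rw [ey, pow_succ]
        _ = y % p + (x * p ^ b + y / p) * p := by ring
    have hmod : (x * p ^ (b + 1) + y) % p = y % p := by
      rw [key, Nat.add_mul_mod_self_right, Nat.mod_eq_of_lt (Nat.mod_lt _ hp0)]
    have hdiv : (x * p ^ (b + 1) + y) / p = x * p ^ b + y / p := by
      rw [key, Nat.add_mul_div_right _ _ hp0,
        Nat.div_eq_of_lt (Nat.mod_lt _ hp0), Nat.zero_add]
    calc sd p (x * p ^ (b + 1) + y)
        = y % p + sd p (x * p ^ b + y / p) := by rw [sd_def hp, hmod, hdiv]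
      _ = y % p + (sd p x + sd p (y / p)) := by rw [ih x (y / p) hy']
      _ = sd p x + (y % p + sd p (y / p)) := by ring
      _ = sd p x + sd p y := by rw [← sd_def hp]

lemma sd_mul_pow {p : ℕ} (hp : 2 ≤ p) (x b : ℕ) : sd p (x * p ^ b) = sd p x := by
  have := sd_split hp b x 0 (pow_pos (by omega) b)
  simpa [sd_zero] using this

lemma sd_le {p : ℕ} (hp : 2 ≤ p) : ∀ m, sd p m ≤ m := by
  intro m
  induction m using Nat.strong_induction_on with
  | _ m ih =>
    rcases Nat.eq_zero_or_pos m with h | h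
    · simp [h, sd_zero]
    have hp0 : 0 < p := by omega
    have hlt : m / p < m := Nat.div_lt_self h hp
    have e2 := Nat.div_add_mod m p
    have h2 : m / p ≤ p * (m / p) := Nat.le_mul_of_pos_left _ hp0
    calc sd p m = m % p + sd p (m / p) := sd_def hp m
      _ ≤ m % p + m / p := by have := ih _ hlt; omega
      _ ≤ m := by omega

lemma sd_lt {p : ℕ} (hp : 2 ≤ p) {m : ℕ} (hm : p ≤ m) : sd p m < m := by
  have hp0 : 0 < p := by omega
  have h1 : 1 ≤ m / p := (Nat.one_le_div_iff hp0).mpr hm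
  have e2 := Nat.div_add_mod m p
  have h2 : 2 * (m / p) ≤ p * (m / p) := Nat.mul_le_mul_right _ hp
  calc sd p m = m % p + sd p (m / p) := sd_def hp m
    _ ≤ m % p + m / p := by have := sd_le hp (m / p); omega
    _ < m := by omega

lemma sd_digit_remove {p : ℕ} (hp : 2 ≤ p) (m k : ℕ) :
    sd p (m - (m / p ^ k % p) * p ^ k) + m / p ^ k % p = sd p m := by
  have hp0 : 0 < p := by omega
  set h := m / p ^ k with hh
  set d := h % p with hd
  set lo := m % p ^ k with hlo
  have hlo_lt : lo < p ^ k := Nat.mod_lt _ (pow_pos hp0 k)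
  have hm : m = h * p ^ k + lo := by
    rw [hh, hlo, mul_comm]; exact (Nat.div_add_mod m (p ^ k)).symm
  have hdh : d ≤ h := Nat.mod_le _ _
  have hsub : m - d * p ^ k = (h - d) * p ^ k + lo := by
    rw [hm, Nat.sub_mul, Nat.sub_add_comm (Nat.mul_le_mul_right _ hdh)]
  have eh := Nat.div_add_mod h p
  have hhd : h - d = p * (h / p) := by
    rw [hd]; omega
  have hfold : m - d * p ^ k = (h / p) * p ^ (k + 1) + lo := by
    rw [hsub, hhd]; ring
  have h1 : sd p (m - d * p ^ k) = sd p (h / p) + sd p lo := by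
    rw [hfold]
    exact sd_split hp (k + 1) _ _ (lt_of_lt_of_le hlo_lt (Nat.pow_le_pow_right hp0 (by omega)))
  have h2 : sd p m = sd p h + sd p lo := by
    conv_lhs => rw [hm]
    exact sd_split hp k _ _ hlo_lt
  have h3 : sd p h = d + sd p (h / p) := sd_def hp h
  omega

lemma sd_sum_range {p : ℕ} (hp : 2 ≤ p) :
    ∀ b m, m < p ^ b → (∑ k ∈ Finset.range b, m / p ^ k % p) = sd p m := by
  have hp0 : 0 < p := by omega
  intro b
  induction b with
  | zero =>
    intro m hm
    have : m = 0 := by simpa using hm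
    simp [this, sd_zero]
  | succ b ih =>
    intro m hm
    have hm' : m / p < p ^ b := by
      rw [Nat.div_lt_iff_lt_mul hp0, ← pow_succ]; exact hm
    rw [Finset.sum_range_succ']
    have hterm : ∀ k, m / p ^ (k + 1) % p = (m / p) / p ^ k % p := by
      intro k
      rw [Nat.div_div_eq_div_mul, ← pow_succ']
    calc (∑ k ∈ Finset.range b, m / p ^ (k + 1) % p) + m / p ^ 0 % p
        = (∑ k ∈ Finset.range b, (m / p) / p ^ k % p) + m % p := by
          rw [Finset.sum_congr rfl fun k _ => hterm k]; simp
      _ = sd p (m / p) + m % p := by rw [ih _ hm']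
      _ = sd p m := by rw [sd_def hp m]; omega

lemma sd_modrep {p A Q : ℕ} (hp : 2 ≤ p) (hQ : Q = p ^ A) (hq2 : 2 ≤ Q) :
    ∀ m r, 1 ≤ r → r ≤ Q - 1 → r ≤ m → (Q - 1) ∣ (m - r) → sd p r ≤ sd p m := by
  intro m
  induction m using Nat.strong_induction_on with
  | _ m ih =>
    intro r hr1 hrQ hrm hdvd
    rcases Nat.lt_or_ge m Q with hm | hm
    · -- m ≤ Q - 1 : forces r = m
      have : m - r = 0 := Nat.eq_zero_of_dvd_of_lt hdvd (by omega)
      have : r = m := by omega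
      rw [this]
    · -- m ≥ Q : fold
      have hQ0 : 0 < Q := by omega
      have eQ := Nat.div_add_mod m Q
      have hA1 : 1 ≤ m / Q := (Nat.one_le_div_iff hQ0).mpr hm
      set m₂ := m / Q + m % Q with hm₂
      have hfold : m = (m / Q) * Q + m % Q := by rw [mul_comm]; exact eQ.symm
      have h2Q : 2 * (m / Q) ≤ Q * (m / Q) := Nat.mul_le_mul_right _ hq2
      have hm2lt : m₂ < m := by
        have : (m / Q) * Q = Q * (m / Q) := mul_comm _ _
        omega
      have hm2sd : sd p m₂ ≤ sd p m := by
        have hsplit : sd p m = sd p (m / Q) + sd p (m % Q) := by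
          conv_lhs => rw [hfold]
          rw [hQ]
          exact sd_split hp A _ _ (by rw [← hQ]; exact Nat.mod_lt _ hQ0)
        calc sd p m₂ ≤ sd p (m / Q) + sd p (m % Q) := sd_add_le hp _ _
          _ = sd p m := hsplit.symm
      have hdvd2 : (Q - 1) ∣ (m - m₂) := by
        have : m - m₂ = (m / Q) * (Q - 1) := by
          have h1 : (m / Q) * (Q - 1) = (m / Q) * Q - m / Q := by
            rw [Nat.mul_sub, mul_one]
          have h3 : m / Q ≤ (m / Q) * Q := Nat.le_mul_of_pos_right _ hQ0
          omega
        rw [this]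
        exact Dvd.intro_left _ rfl
      have hrm2 : r ≤ m₂ := by
        by_contra hc
        push_neg at hc
        have hdvd3 : (Q - 1) ∣ (r - m₂) := by
          have : r - m₂ = (m - m₂) - (m - r) := by omega
          rw [this]
          exact Nat.dvd_sub hdvd2 hdvd
        have : r - m₂ = 0 := Nat.eq_zero_of_dvd_of_lt hdvd3 (by omega)
        omega
      have hdvd4 : (Q - 1) ∣ (m₂ - r) := by
        have : m₂ - r = (m - r) - (m - m₂) := by omega
        rw [this]
        exact Nat.dvd_sub hdvd hdvd2
      calc sd p r ≤ sd p m₂ := ih m₂ hm2lt r hr1 hrQ hrm2 hdvd4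
        _ ≤ sd p m := hm2sd

lemma reduce {n N : ℕ} (a : Fin N → Fin n → ℤ) (q : ℕ) (hq2 : 2 ≤ q)
    (M : Set (Fin n → ℤ))
    (hM : ∀ c : Fin N → ℕ, (fun j => ∑ i, (c i : ℤ) * a i j) ∈ M →
      ∀ i₀ : Fin N, q ≤ c i₀ →
        (fun j => (∑ i, (c i : ℤ) * a i j) - ((q : ℤ) - 1) * a i₀ j) ∈ M) :
    ∀ c : Fin N → ℕ, (fun j => ∑ i, (c i : ℤ) * a i j) ∈ M →
      ∃ c'' : Fin N → ℕ, (fun j => ∑ i, (c'' i : ℤ) * a i j) ∈ M ∧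
        (∀ i, c'' i ≤ q - 1) ∧
        (∀ i, c'' i = c i ∨ (1 ≤ c'' i ∧ c'' i ≤ c i ∧ (q - 1) ∣ (c i - c'' i))) := by
  have key : ∀ S : ℕ, ∀ c : Fin N → ℕ, (∑ i, c i) ≤ S →
      (fun j => ∑ i, (c i : ℤ) * a i j) ∈ M →
      ∃ c'' : Fin N → ℕ, (fun j => ∑ i, (c'' i : ℤ) * a i j) ∈ M ∧
        (∀ i, c'' i ≤ q - 1) ∧
        (∀ i, c'' i = c i ∨ (1 ≤ c'' i ∧ c'' i ≤ c i ∧ (q - 1) ∣ (c i - c'' i))) := by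
    intro S
    induction S with
    | zero =>
      intro c hs hmem
      refine ⟨c, hmem, fun i => ?_, fun i => Or.inl rfl⟩
      have : c i = 0 := by
        have := Finset.single_le_sum (f := c) (fun i _ => Nat.zero_le _) (Finset.mem_univ i)
        omega
      omega
    | succ S ih =>
      intro c hs hmem
      by_cases hall : ∀ i, c i ≤ q - 1
      · exact ⟨c, hmem, hall, fun i => Or.inl rfl⟩
      · push_neg at hall
        obtain ⟨i0, hi0⟩ := hall
        have hqc : q ≤ c i0 := by omega
        set c' : Fin N → ℕ := Function.update c i0 (c i0 - (q - 1)) with hc'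
        have hmem' : (fun j => ∑ i, (c' i : ℤ) * a i j) ∈ M := by
          have h2 := hM c hmem i0 hqc
          have heq : (fun j => ∑ i, (c' i : ℤ) * a i j)
              = (fun j => (∑ i, (c i : ℤ) * a i j) - ((q : ℤ) - 1) * a i0 j) := by
            funext j
            have h1 : ∀ i, (c' i : ℤ) * a i j
                = (c i : ℤ) * a i j - (if i = i0 then ((q : ℤ) - 1) * a i0 j else 0) := by
              intro i
              by_cases h : i = i0
              · subst h
                rw [hc', Function.update_self, if_pos rfl]
                have hcast : ((c i - (q - 1) : ℕ) : ℤ) = (c i : ℤ) - ((q : ℤ) - 1) := by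
                  push_cast [Nat.cast_sub (show q - 1 ≤ c i from by omega),
                    Nat.cast_sub (show 1 ≤ q from by omega)]
                  ring
                rw [hcast]
                ring
              · rw [hc', Function.update_of_ne h]
                simp [h]
            rw [Finset.sum_congr rfl fun i _ => h1 i, Finset.sum_sub_distrib,
              Finset.sum_ite_eq' Finset.univ i0 (fun _ => ((q : ℤ) - 1) * a i0 j)]
            simp
          rw [heq]; exact h2
        have hsum' : (∑ i, c' i) ≤ S := by
          have e1 : ∑ i, c' i = (c i0 - (q - 1)) + ∑ i ∈ Finset.univ \ {i0}, c i := by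
            rw [hc']
            exact Finset.sum_update_of_mem (Finset.mem_univ i0) c _
          have e2 : ∑ i, c i = (∑ i ∈ Finset.univ \ {i0}, c i) + c i0 :=
            Finset.sum_eq_sum_sdiff_singleton_add (Finset.mem_univ i0) c
          omega
        obtain ⟨c'', hm'', hle'', hrel''⟩ := ih c' hsum' hmem'
        refine ⟨c'', hm'', hle'', fun i => ?_⟩
        by_cases h : i = i0
        · subst h
          have hc'i : c' i = c i - (q - 1) := by rw [hc', Function.update_self]
          right
          rcases hrel'' i with h' | ⟨ha, hb, hdv⟩
          · rw [h', hc'i]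
            refine ⟨by omega, by omega, ⟨1, by omega⟩⟩
          · rw [hc'i] at hb hdv
            refine ⟨ha, by omega, ?_⟩
            have : c i - c'' i = ((c i - (q - 1)) - c'' i) + (q - 1) := by omega
            rw [this]
            exact Nat.dvd_add hdv ⟨1, by omega⟩
        · have hc'i : c' i = c i := by rw [hc', Function.update_of_ne h]
          have hr := hrel'' i
          rw [hc'i] at hr
          exact hr
  intro c hmem
  exact key (∑ i, c i) c le_rfl hmem

/-- Proposition 5.6: if `u ∈ U_M` minimizes the `p`-weight `w_p` over `U_M`
(for `M` satisfying the reduction condition), then each `γ_k = Σᵢ u_i^{(k)} aᵢ`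
is good and the digit vector `u^{(k)}` lies in `U⁺_min(γ_k)`. -/
theorem stmt10 {n N : ℕ} (a : Fin N → Fin n → ℤ) (p : ℕ) (hp : p.Prime)
    (aexp : ℕ) (q : ℕ) (hq : q = p ^ aexp)
    (M : Set (Fin n → ℤ))
    (hM : ∀ c : Fin N → ℕ, (fun j => ∑ i, (c i : ℤ) * a i j) ∈ M →
      ∀ i₀ : Fin N, q ≤ c i₀ →
        (fun j => (∑ i, (c i : ℤ) * a i j) - ((q : ℤ) - 1) * a i₀ j) ∈ M)
    (UM : Set (Fin N → ℕ))
    (hUM : UM = {v | (∀ i, v i ≤ q - 1) ∧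
      (fun j => ∑ i, (v i : ℤ) * a i j) ∈ M})
    (hUMne : UM.Nonempty)
    (wp : (Fin N → ℕ) → ℕ)
    (hwp : ∀ v, wp v = ∑ i, ∑ k ∈ Finset.range aexp, (v i / p ^ k) % p)
    (w : (Fin n → ℤ) → ℕ)
    (hw : ∀ β, w β = sInf {s | ∃ v : Fin N → ℕ,
      (∀ j, ∑ i, (v i : ℤ) * a i j = β j) ∧ ∑ i, v i = s})
    (u : Fin N → ℕ) (hu : u ∈ UM)
    (humin : ∀ v ∈ UM, wp u ≤ wp v)
    (γ : ℕ → (Fin n → ℤ))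
    (hγ : ∀ k j, γ k j = ∑ i, (((u i / p ^ k) % p : ℕ) : ℤ) * a i j) :
    ∀ k < aexp,
      -- γ_k is good: every minimal representation has coordinates ≤ p - 1
      (∀ v : Fin N → ℕ, (∀ j, ∑ i, (v i : ℤ) * a i j = γ k j) →
        ∑ i, v i = w (γ k) → ∀ i, v i ≤ p - 1) ∧
      -- the k-th digit vector of u is a minimal representation of γ_k
      ∑ i, (u i / p ^ k) % p = w (γ k) := by
  intro k hk
  have hp2 : 2 ≤ p := hp.two_le
  have hq2 : 2 ≤ q := by
    rw [hq]
    calc 2 ≤ p := hp2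
      _ = p ^ 1 := (pow_one p).symm
      _ ≤ p ^ aexp := Nat.pow_le_pow_right (by omega) (by omega)
  rw [hUM] at hu
  obtain ⟨hu_le, hu_mem⟩ := hu
  set d : Fin N → ℕ := fun i => u i / p ^ k % p with hd
  have hγd : ∀ j, ∑ i, (d i : ℤ) * a i j = γ k j := fun j => (hγ k j).symm
  have hsd_wp : ∀ x : Fin N → ℕ, (∀ i, x i ≤ q - 1) → wp x = ∑ i, sd p (x i) := by
    intro x hx
    rw [hwp]
    refine Finset.sum_congr rfl fun i _ => ?_
    refine sd_sum_range hp2 aexp (x i) ?_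
    have := hx i
    omega
  have KEY : ∀ v : Fin N → ℕ, (∀ j, ∑ i, (v i : ℤ) * a i j = γ k j) →
      (∑ i, d i) ≤ ∑ i, sd p (v i) := by
    intro v hv
    have hdle : ∀ i, d i * p ^ k ≤ u i := by
      intro i
      calc d i * p ^ k ≤ u i / p ^ k * p ^ k :=
            Nat.mul_le_mul_right _ (Nat.mod_le _ _)
        _ ≤ u i := Nat.div_mul_le_self _ _
    set c : Fin N → ℕ := fun i => (u i - d i * p ^ k) + v i * p ^ k with hc
    have hci : ∀ i, c i = (u i - d i * p ^ k) + v i * p ^ k := fun i => rfl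
    have hcmem : (fun j => ∑ i, (c i : ℤ) * a i j) ∈ M := by
      have heq : (fun j => ∑ i, (c i : ℤ) * a i j)
          = (fun j => ∑ i, (u i : ℤ) * a i j) := by
        funext j
        have h1 : ∀ i, (c i : ℤ) * a i j =
            (u i : ℤ) * a i j - (p ^ k : ℤ) * ((d i : ℤ) * a i j)
              + (p ^ k : ℤ) * ((v i : ℤ) * a i j) := by
          intro i
          have hcast : (c i : ℤ)
              = (u i : ℤ) - (d i : ℤ) * (p ^ k : ℤ) + (v i : ℤ) * (p ^ k : ℤ) := by
            rw [hci i]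
            push_cast [Nat.cast_sub (hdle i)]
            ring
          rw [hcast]; ring
        rw [Finset.sum_congr rfl fun i _ => h1 i, Finset.sum_add_distrib,
          Finset.sum_sub_distrib, ← Finset.mul_sum, ← Finset.mul_sum, hγd j, hv j]
        ring
      rw [heq]; exact hu_mem
    obtain ⟨c'', hm'', hle'', hrel''⟩ := reduce a q hq2 M hM c hcmem
    have hc''UM : c'' ∈ UM := by rw [hUM]; exact ⟨hle'', hm''⟩
    have hwpu := humin c'' hc''UM
    rw [hsd_wp u hu_le, hsd_wp c'' hle''] at hwpu
    have h2 : ∀ i, sd p (c'' i) ≤ sd p (c i) := by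
      intro i
      rcases hrel'' i with h | ⟨ha, hb, hdv⟩
      · rw [h]
      · exact sd_modrep hp2 hq hq2 (c i) (c'' i) ha (hle'' i) hb hdv
    have h3 : ∀ i, sd p (c i) + d i ≤ sd p (u i) + sd p (v i) := by
      intro i
      have hA : sd p (c i) ≤ sd p (u i - d i * p ^ k) + sd p (v i) := by
        rw [hci i]
        calc sd p ((u i - d i * p ^ k) + v i * p ^ k)
            ≤ sd p (u i - d i * p ^ k) + sd p (v i * p ^ k) := sd_add_le hp2 _ _
          _ = sd p (u i - d i * p ^ k) + sd p (v i) := by rw [sd_mul_pow hp2]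
      have hB : sd p (u i - d i * p ^ k) + d i = sd p (u i) :=
        sd_digit_remove hp2 (u i) k
      omega
    have h4 : (∑ i, (sd p (c i) + d i)) ≤ ∑ i, (sd p (u i) + sd p (v i)) :=
      Finset.sum_le_sum fun i _ => h3 i
    rw [Finset.sum_add_distrib, Finset.sum_add_distrib] at h4
    have h5 : (∑ i, sd p (c'' i)) ≤ ∑ i, sd p (c i) :=
      Finset.sum_le_sum fun i _ => h2 i
    omega
  have hWmem : (∑ i, d i) ∈ {s | ∃ v : Fin N → ℕ,
      (∀ j, ∑ i, (v i : ℤ) * a i j = γ k j) ∧ ∑ i, v i = s} := ⟨d, hγd, rfl⟩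
  obtain ⟨v₀, hv₀rep, hv₀sum⟩ := Nat.sInf_mem (Set.nonempty_of_mem hWmem)
  have hle : sInf {s | ∃ v : Fin N → ℕ,
      (∀ j, ∑ i, (v i : ℤ) * a i j = γ k j) ∧ ∑ i, v i = s} ≤ ∑ i, d i :=
    Nat.sInf_le hWmem
  have h0 := KEY v₀ hv₀rep
  have hsd0 : (∑ i, sd p (v₀ i)) ≤ ∑ i, v₀ i :=
    Finset.sum_le_sum fun i _ => sd_le hp2 _
  have hpart2 : (∑ i, d i) = w (γ k) := by rw [hw]; exact le_antisymm (hv₀sum ▸ (h0.trans hsd0)) hle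
  refine ⟨?_, hpart2⟩
  intro v hvrep hvsum i
  have h0v := KEY v hvrep
  have hin : (∑ i, v i) = ∑ i, d i := by rw [hvsum, ← hpart2]
  have hsdv : (∑ i, sd p (v i)) ≤ ∑ i, v i :=
    Finset.sum_le_sum fun i _ => sd_le hp2 _
  have heq : ∀ i', sd p (v i') = v i' := by
    by_contra hcon
    push_neg at hcon
    obtain ⟨i', hi'⟩ := hcon
    have hlt : sd p (v i') < v i' := lt_of_le_of_ne (sd_le hp2 _) hi'
    have : (∑ i, sd p (v i)) < ∑ i, v i :=
      Finset.sum_lt_sum (fun i _ => sd_le hp2 _) ⟨i', Finset.mem_univ _, hlt⟩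
    clear * - this hsdv hin h0v; omega
  by_contra hvp
  push_neg at hvp
  have hlt2 : sd p (v i) < v i := sd_lt hp2 (by clear * - hvp hp2; omega)
  rw [heq i] at hlt2
  clear * - hlt2 heq hvp hp2; omega
end

section
/- Conversely to Proposition 5.6: given good elements γ_0,...,γ_{a−1} ∈ ℤ^n with Σ_{k=0}^{a−1} p^k γ_k ∈ M and Σ_{k=0}^{a−1} w(γ_k) = w_p(M), and any choice u^{(k)} ∈ U⁺_min(γ_k) for each k, the vector u defined by u_i = Σ_k u_i^{(k)} p^k lies in {0,...,q−1}^N, belongs to U_M, and satisfies w_p(u) = w_p(M). -/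
lemma digsum_lt (p : ℕ) (hp : 2 ≤ p) :
    ∀ (a : ℕ) (c : ℕ → ℕ), (∀ k, c k < p) →
      (∑ k ∈ Finset.range a, c k * p ^ k) < p ^ a := by
  intro a
  induction a with
  | zero => intro c hc; simp
  | succ a ih =>
    intro c hc
    rw [Finset.sum_range_succ']
    have hT : (∑ k ∈ Finset.range a, c (k+1) * p ^ k) < p ^ a := ih _ (fun k => hc _)
    have h1 : ∑ k ∈ Finset.range a, c (k+1) * p ^ (k+1)
        = p * ∑ k ∈ Finset.range a, c (k+1) * p ^ k := by
      rw [Finset.mul_sum]; exact Finset.sum_congr rfl fun k _ => by ring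
    rw [h1]
    simp only [pow_zero, mul_one]
    calc p * (∑ k ∈ Finset.range a, c (k+1) * p ^ k) + c 0
        < p * (∑ k ∈ Finset.range a, c (k+1) * p ^ k) + p := by
          exact Nat.add_lt_add_left (hc 0) _
      _ = p * ((∑ k ∈ Finset.range a, c (k+1) * p ^ k) + 1) := by ring
      _ ≤ p * p ^ a := Nat.mul_le_mul_left p hT
      _ = p ^ (a+1) := (pow_succ' p a).symm

lemma digsum_digit (p : ℕ) (hp : 2 ≤ p) :
    ∀ (j a : ℕ) (c : ℕ → ℕ), (∀ k, c k < p) → j < a →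
      ((∑ k ∈ Finset.range a, c k * p ^ k) / p ^ j) % p = c j := by
  intro j
  induction j with
  | zero =>
    intro a c hc ha
    obtain ⟨a', rfl⟩ := Nat.exists_eq_succ_of_ne_zero (by omega : a ≠ 0)
    rw [Finset.sum_range_succ']
    have h1 : ∑ k ∈ Finset.range a', c (k+1) * p ^ (k+1)
        = (∑ k ∈ Finset.range a', c (k+1) * p ^ k) * p := by
      rw [Finset.sum_mul]; exact Finset.sum_congr rfl fun k _ => by ring
    rw [h1]
    simp only [pow_zero, mul_one, Nat.div_one]
    rw [Nat.mul_add_mod', Nat.mod_eq_of_lt (hc 0)]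
  | succ j ih =>
    intro a c hc ha
    obtain ⟨a', rfl⟩ := Nat.exists_eq_succ_of_ne_zero (by omega : a ≠ 0)
    rw [Finset.sum_range_succ']
    have h1 : ∑ k ∈ Finset.range a', c (k+1) * p ^ (k+1)
        = p * ∑ k ∈ Finset.range a', c (k+1) * p ^ k := by
      rw [Finset.mul_sum]; exact Finset.sum_congr rfl fun k _ => by ring
    rw [h1]
    simp only [pow_zero, mul_one]
    rw [pow_succ' p j, ← Nat.div_div_eq_div_mul]
    have h2 : (p * (∑ k ∈ Finset.range a', c (k+1) * p ^ k) + c 0) / p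
        = ∑ k ∈ Finset.range a', c (k+1) * p ^ k := by
      rw [Nat.mul_add_div (by omega), Nat.div_eq_of_lt (hc 0), Nat.add_zero]
    rw [h2]
    exact ih a' (fun k => c (k+1)) (fun k => hc _) (by omega)



/-- Converse to Proposition 5.6: from good `γ_0,…,γ_{a-1}` with
`Σ_k p^k γ_k ∈ M` and `Σ_k w(γ_k) = w_p(M)`, and choices
`u^{(k)} ∈ U⁺_min(γ_k)`, the vector `u_i = Σ_k u_i^{(k)} p^k` lies in
`{0,…,q-1}^N`, belongs to `U_M`, and satisfies `w_p(u) = w_p(M)`. -/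
theorem stmt12 {n N : ℕ} (a : Fin N → Fin n → ℤ) (p : ℕ) (hp : p.Prime)
    (aexp : ℕ) (q : ℕ) (hq : q = p ^ aexp)
    (M : Set (Fin n → ℤ))
    (hM : ∀ c : Fin N → ℕ, (fun j => ∑ i, (c i : ℤ) * a i j) ∈ M →
      ∀ i₀ : Fin N, q ≤ c i₀ →
        (fun j => (∑ i, (c i : ℤ) * a i j) - ((q : ℤ) - 1) * a i₀ j) ∈ M)
    (UM : Set (Fin N → ℕ))
    (hUM : UM = {v | (∀ i, v i ≤ q - 1) ∧
      (fun j => ∑ i, (v i : ℤ) * a i j) ∈ M})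
    (hUMne : UM.Nonempty)
    (wp : (Fin N → ℕ) → ℕ)
    (hwp : ∀ v, wp v = ∑ i, ∑ k ∈ Finset.range aexp, (v i / p ^ k) % p)
    (wpM : ℕ) (hwpM : IsLeast {s | ∃ v ∈ UM, wp v = s} wpM)
    (w : (Fin n → ℤ) → ℕ)
    (hw : ∀ β, w β = sInf {s | ∃ v : Fin N → ℕ,
      (∀ j, ∑ i, (v i : ℤ) * a i j = β j) ∧ ∑ i, v i = s})
    (γ : Fin aexp → (Fin n → ℤ))
    -- each γ_k is good
    (hgood : ∀ k, ∀ v : Fin N → ℕ,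
      (∀ j, ∑ i, (v i : ℤ) * a i j = γ k j) → ∑ i, v i = w (γ k) →
        ∀ i, v i ≤ p - 1)
    (hγM : (fun j => ∑ k : Fin aexp, (p : ℤ) ^ (k : ℕ) * γ k j) ∈ M)
    (hγw : ∑ k : Fin aexp, w (γ k) = wpM)
    (d : Fin aexp → (Fin N → ℕ))
    -- each d k is a minimal representation of γ_k
    (hd : ∀ k, (∀ j, ∑ i, (d k i : ℤ) * a i j = γ k j) ∧
      ∑ i, d k i = w (γ k))
    (u : Fin N → ℕ)
    (hu : ∀ i, u i = ∑ k : Fin aexp, d k i * p ^ (k : ℕ)) :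
    (∀ i, u i ≤ q - 1) ∧ u ∈ UM ∧ wp u = wpM := by
  
  have hp2 : 2 ≤ p := hp.two_le
  set c : Fin N → ℕ → ℕ := fun i k => if h : k < aexp then d ⟨k, h⟩ i else 0 with hc
  have hck : ∀ i k, c i k < p := by
    intro i k
    simp only [hc]
    split
    · rename_i h
      have := hgood ⟨k, h⟩ (d ⟨k, h⟩) (hd ⟨k, h⟩).1 (hd ⟨k, h⟩).2 i
      omega
    · omega
  have hcd : ∀ (i : Fin N) (k : Fin aexp), c i (k : ℕ) = d k i := by
    intro i k
    simp only [hc, dif_pos k.isLt, Fin.eta]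
  have hui : ∀ i, u i = ∑ k ∈ Finset.range aexp, c i k * p ^ k := by
    intro i
    rw [hu i, ← Fin.sum_univ_eq_sum_range (fun k => c i k * p ^ k) aexp]
    exact Finset.sum_congr rfl fun k _ => by rw [hcd]
  have hq1 : 1 ≤ q := by rw [hq]; exact Nat.one_le_pow _ _ (by omega)
  have hlt : ∀ i, u i < q := by
    intro i
    rw [hui i, hq]
    exact digsum_lt p hp2 aexp (c i) (hck i)
  have hle : ∀ i, u i ≤ q - 1 := fun i => by have := hlt i; omega
  have hsum : (fun j => ∑ i, (u i : ℤ) * a i j)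
      = (fun j => ∑ k : Fin aexp, (p : ℤ) ^ (k : ℕ) * γ k j) := by
    funext j
    have hui' : ∀ i, (u i : ℤ) = ∑ k : Fin aexp, (d k i : ℤ) * (p : ℤ) ^ (k : ℕ) := by
      intro i; rw [hu i]; push_cast; rfl
    calc ∑ i, (u i : ℤ) * a i j
        = ∑ i, ∑ k : Fin aexp, (d k i : ℤ) * (p : ℤ) ^ (k : ℕ) * a i j := by
          refine Finset.sum_congr rfl fun i _ => ?_
          rw [hui' i, Finset.sum_mul]
      _ = ∑ k : Fin aexp, ∑ i, (d k i : ℤ) * (p : ℤ) ^ (k : ℕ) * a i j :=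
          Finset.sum_comm
      _ = ∑ k : Fin aexp, (p : ℤ) ^ (k : ℕ) * ∑ i, (d k i : ℤ) * a i j := by
          refine Finset.sum_congr rfl fun k _ => ?_
          rw [Finset.mul_sum]
          exact Finset.sum_congr rfl fun i _ => by ring
      _ = ∑ k : Fin aexp, (p : ℤ) ^ (k : ℕ) * γ k j := by
          refine Finset.sum_congr rfl fun k _ => ?_
          rw [show ∑ i, (d k i : ℤ) * a i j = γ k j from funext_iff.mp
            (funext (hd k).1) j]
  have hmem : u ∈ UM := by
    rw [hUM]
    exact ⟨hle, by rw [hsum]; exact hγM⟩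
  refine ⟨hle, hmem, ?_⟩
  rw [hwp u]
  have : ∀ i : Fin N, ∑ k ∈ Finset.range aexp, (u i / p ^ k) % p
      = ∑ k : Fin aexp, d k i := by
    intro i
    rw [← Fin.sum_univ_eq_sum_range (fun k => (u i / p ^ k) % p) aexp]
    refine Finset.sum_congr rfl fun k _ => ?_
    rw [hui i, digsum_digit p hp2 (k : ℕ) aexp (c i) (hck i) k.isLt, hcd]
  rw [Finset.sum_congr rfl fun i _ => this i, Finset.sum_comm, ← hγw]
  exact Finset.sum_congr rfl fun k _ => (hd k).2
end

section
/- Let A = {1, −1} ⊆ ℤ, p an odd prime, q = p, and M = e + (p−1)ℤ for an integer e with 0 ≤ e < p−1. Then the set of w_p-minimizing elements of U_M = {(u_1,u_2) ∈ {0,...,p−1}² : u_1 − u_2 ≡ e mod (p−1)} equals: {(e,0)} if e < (p−1)/2; {(0, p−1−e)} if e > (p−1)/2; and {((p−1)/2, 0), (0, (p−1)/2)} if e = (p−1)/2. -/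
/-- Example 2 over `𝔽_p`: for `A = {1,-1}`, `M = e + (p-1)ℤ` with
`0 ≤ e < p-1`, the minimizers of `w_p(u) = u₁ + u₂` on
`U_M = {u ∈ {0,…,p-1}² : u₁ - u₂ ≡ e (mod p-1)}` are `{(e,0)}` if
`e < (p-1)/2`, `{(0, p-1-e)}` if `e > (p-1)/2`, and
`{((p-1)/2, 0), (0, (p-1)/2)}` if `e = (p-1)/2`. -/
theorem stmt13 (p : ℕ) (hp : p.Prime) (hodd : Odd p)
    (e : ℕ) (he : e < p - 1)
    (UM : Set (ℕ × ℕ))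
    (hUM : UM = {u : ℕ × ℕ | u.1 ≤ p - 1 ∧ u.2 ≤ p - 1 ∧
      ((p : ℤ) - 1) ∣ ((u.1 : ℤ) - u.2 - e)}) :
    {u ∈ UM | ∀ v ∈ UM, u.1 + u.2 ≤ v.1 + v.2}
      = if 2 * e < p - 1 then {(e, 0)}
        else if p - 1 < 2 * e then {(0, p - 1 - e)}
        else {((p - 1) / 2, 0), (0, (p - 1) / 2)} := by
  subst hUM
  have hp3 : 3 ≤ p := by
    rcases hodd with ⟨m, hm⟩
    have := hp.two_le
    omega
  have key : ∀ a b : ℕ, a ≤ p - 1 → b ≤ p - 1 →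
      ((p : ℤ) - 1) ∣ ((a : ℤ) - b - e) →
      a = b + e ∨ b = a + (p - 1 - e) ∨ (e = 0 ∧ a = p - 1 ∧ b = 0) := by
    intro a b ha hb ⟨k, hk⟩
    have ha' : (a : ℤ) ≤ (p : ℤ) - 1 := by omega
    have hb' : (b : ℤ) ≤ (p : ℤ) - 1 := by omega
    have he' : (e : ℤ) < (p : ℤ) - 1 := by omega
    have hp' : (2 : ℤ) ≤ (p : ℤ) - 1 := by omega
    have hk1 : k ≤ 1 := by nlinarith
    have hk2 : -1 ≤ k := by nlinarith
    interval_cases k <;> omega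
  split_ifs with h1 h2
  · ext ⟨a, b⟩
    simp only [Set.mem_setOf_eq, Set.mem_singleton_iff, Prod.mk.injEq]
    constructor
    · rintro ⟨⟨ha, hb, hd⟩, hmin⟩
      have hle := hmin (e, 0) ⟨by omega, by omega, ⟨0, by omega⟩⟩
      simp only at hle
      rcases key a b ha hb hd with h | h | h <;> omega
    · rintro ⟨rfl, rfl⟩
      refine ⟨⟨by omega, by omega, ⟨0, by omega⟩⟩, ?_⟩
      rintro ⟨c, d⟩ ⟨hc, hd, hdd⟩
      rcases key c d hc hd hdd with h | h | h <;> simp only <;> omega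
  · ext ⟨a, b⟩
    simp only [Set.mem_setOf_eq, Set.mem_singleton_iff, Prod.mk.injEq]
    constructor
    · rintro ⟨⟨ha, hb, hd⟩, hmin⟩
      have hle := hmin (0, p - 1 - e) ⟨by omega, by omega, ⟨-1, by omega⟩⟩
      simp only at hle
      rcases key a b ha hb hd with h | h | h <;> omega
    · rintro ⟨rfl, rfl⟩
      refine ⟨⟨by omega, by omega, ⟨-1, by omega⟩⟩, ?_⟩
      rintro ⟨c, d⟩ ⟨hc, hd, hdd⟩
      rcases key c d hc hd hdd with h | h | h <;> simp only <;> omega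
  · ext ⟨a, b⟩
    simp only [Set.mem_setOf_eq, Set.mem_insert_iff, Set.mem_singleton_iff,
      Prod.mk.injEq]
    constructor
    · rintro ⟨⟨ha, hb, hd⟩, hmin⟩
      have hle := hmin (e, 0) ⟨by omega, by omega, ⟨0, by omega⟩⟩
      simp only at hle
      rcases key a b ha hb hd with h | h | h <;> omega
    · rintro (⟨rfl, rfl⟩ | ⟨rfl, rfl⟩)
      · refine ⟨⟨by omega, by omega, ⟨0, by omega⟩⟩, ?_⟩
        rintro ⟨c, d⟩ ⟨hc, hd, hdd⟩
        rcases key c d hc hd hdd with h | h | h <;> simp only <;> omega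
      · refine ⟨⟨by omega, by omega, ⟨-1, by omega⟩⟩, ?_⟩
        rintro ⟨c, d⟩ ⟨hc, hd, hdd⟩
        rcases key c d hc hd hdd with h | h | h <;> simp only <;> omega
end
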